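/- For all real numbers Ȳ, f₁, f₂, f₃, C_y, C_x, C_z, ρ_yx, ρ_yz, θ with C_z ≠ 0 and θ ≠ 1, substituting α_opt = (K_yz − θ)/(1 − θ) (with K_yz = ρ_yz C_y / C_z) into MSE(α) = Ȳ²[f₁C_y² + f₃C_x² + (α + θ − αθ)²f₂C_z² − 2f₃ρ_yx C_y C_x − 2(α + θ − αθ)f₂ρ_yz C_y C_z] yields exactly M₀ = Ȳ²[f₁C_y² + f₃(C_x² − 2ρ_yx C_y C_x) − f₂ρ_yz²C_y²]. -/
import Mathlib

theorem mse_at_alpha_opt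
    (Ybar f1 f2 f3 Cy Cx Cz ρyx ρyz θ : ℝ) (hCz : Cz ≠ 0) (hθ : θ ≠ 1) :
    Ybar^2 * (f1*Cy^2 + f3*Cx^2
      + ((ρyz*Cy/Cz - θ)/(1 - θ) + θ - (ρyz*Cy/Cz - θ)/(1 - θ)*θ)^2 * f2 * Cz^2
      - 2*f3*ρyx*Cy*Cx
      - 2*((ρyz*Cy/Cz - θ)/(1 - θ) + θ - (ρyz*Cy/Cz - θ)/(1 - θ)*θ)*f2*ρyz*Cy*Cz)
    = Ybar^2 * (f1*Cy^2 + f3*(Cx^2 - 2*ρyx*Cy*Cx) - f2*ρyz^2*Cy^2) := by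
  have h1 : (1 : ℝ) - θ ≠ 0 := sub_ne_zero.mpr (Ne.symm hθ)
  field_simp
  ring
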